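/- Under the heading controller ω_i = −κ δ_i for unicycles ṗ_i = (cos α_i, sin α_i), with all pairwise heading differences decaying as δ_ij(t) = δ_ij(0)e^{−κt} and δ_ij(0) ∈ (−2π,2π), the centroid-relative coordinate x_i(t) = p_i(t) − (1/N)Σ_j p_j(t) satisfies ||x_i(t) − x_i(0)|| ≤ ((N−1)/N)·(2π/κ) for all t ≥ 0 and all i. -/

import Mathlib

/-!
Each heading difference solves `δ' = -κ δ`, so `|δᵢⱼ(s)| = |δᵢⱼ(0)| e^{-κs}`. As
`θ ↦ (cos θ, sin θ)` is 1-Lipschitz, the relative position `pᵢ - pⱼ` moves with speed at most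
`|δᵢⱼ(0)| e^{-κs}`, hence by at most `|δᵢⱼ(0)| / κ < 2π / κ` in total. The displacement of `xᵢ`
is the average over `j` of these `N` relative displacements, of which the one with `j = i` is zero.
-/

open Real

theorem eq_mul_exp_of_hasDerivAt_neg_mul {κ : ℝ} {d : ℝ → ℝ}
    (hd : ∀ t, HasDerivAt d (-κ * d t) t) (t : ℝ) : d t = d 0 * exp (-κ * t) := by
  have hconst : ∀ s, HasDerivAt (fun u => d u * exp (κ * u)) 0 s := fun s => by
    have hexp : HasDerivAt (fun u => exp (κ * u)) (exp (κ * s) * κ) s := by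
      simpa using ((hasDerivAt_id s).const_mul κ).exp
    exact ((hd s).mul hexp).congr_deriv (by ring)
  have h := is_const_of_deriv_eq_zero (fun s => (hconst s).differentiableAt)
    (fun s => (hconst s).deriv) t 0
  simp only [mul_zero, exp_zero, mul_one] at h
  rw [← h, mul_assoc, ← exp_add]
  simp

theorem norm_cos_sin_sub_cos_sin_le (a b : ℝ) :
    ‖(WithLp.toLp 2 ![cos a, sin a] : EuclideanSpace ℝ (Fin 2)) - WithLp.toLp 2 ![cos b, sin b]‖
      ≤ |a - b| := by
  have hsq : ‖(WithLp.toLp 2 ![cos a, sin a] : EuclideanSpace ℝ (Fin 2))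
      - WithLp.toLp 2 ![cos b, sin b]‖ ^ 2 = 2 - 2 * cos (a - b) := by
    rw [EuclideanSpace.norm_sq_eq, Fin.sum_univ_two]
    simp only [PiLp.sub_apply, Matrix.cons_val_zero, Matrix.cons_val_one, Real.norm_eq_abs, sq_abs,
      cos_sub]
    nlinarith [sin_sq_add_cos_sq a, sin_sq_add_cos_sq b]
  rw [← abs_norm]
  refine sq_le_sq.1 ?_
  rw [hsq]
  linarith [one_sub_sq_div_two_le_cos (x := a - b)]

theorem norm_sub_le_of_norm_deriv_le_exp {E : Type*} [NormedAddCommGroup E] [NormedSpace ℝ E]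
    {f f' : ℝ → E} {κ C t : ℝ} (hκ : κ ≠ 0) (ht : 0 ≤ t) (hf : ∀ s, HasDerivAt f (f' s) s)
    (hf' : ∀ s ∈ Set.Ico 0 t, ‖f' s‖ ≤ C * exp (-κ * s)) :
    ‖f t - f 0‖ ≤ C / κ * (1 - exp (-κ * t)) := by
  have hB : ∀ s, HasDerivAt (fun u => C / κ * (1 - exp (-κ * u))) (C * exp (-κ * s)) s := by
    intro s
    have hexp : HasDerivAt (fun u => exp (-κ * u)) (exp (-κ * s) * -κ) s := by
      simpa using ((hasDerivAt_id s).const_mul (-κ)).exp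
    exact ((hexp.const_sub 1).const_mul (C / κ)).congr_deriv (by field_simp)
  refine image_norm_le_of_norm_deriv_right_le_deriv_boundary
    (f := fun s => f s - f 0) (fun s _ => (hf s).continuousAt.continuousWithinAt.sub_const _)
    (fun s _ => ((hf s).sub_const _).hasDerivWithinAt) (by simp) hB hf' ⟨ht, le_rfl⟩

theorem norm_sub_sum_div_card_le {ι E : Type*} [Fintype ι] [NormedAddCommGroup E]
    [NormedSpace ℝ E] (v : ι → E) (i : ι) {C : ℝ} (hC : ∀ j, ‖v i - v j‖ ≤ C) :
    ‖v i - (Fintype.card ι : ℝ)⁻¹ • ∑ j, v j‖ ≤ ((Fintype.card ι : ℝ) - 1) / Fintype.card ι * C := by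
  classical
  have hcard : 0 < Fintype.card ι := Fintype.card_pos_iff.2 ⟨i⟩
  set n : ℝ := (Fintype.card ι : ℝ)
  have hn : 0 < n := Nat.cast_pos.2 hcard
  have hcentroid : v i - n⁻¹ • ∑ j, v j = n⁻¹ • ∑ j, (v i - v j) := by
    rw [Finset.sum_sub_distrib, Finset.sum_const, Finset.card_univ, ← Nat.cast_smul_eq_nsmul ℝ,
      smul_sub, smul_smul, inv_mul_cancel₀ hn.ne', one_smul]
  have hsum : ∑ j, ‖v i - v j‖ ≤ (n - 1) * C := by
    rw [← Finset.add_sum_erase _ _ (Finset.mem_univ i), sub_self, norm_zero, zero_add]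
    refine (Finset.sum_le_card_nsmul _ _ C fun j _ => hC j).trans_eq ?_
    rw [Finset.card_erase_of_mem (Finset.mem_univ i), Finset.card_univ, nsmul_eq_mul,
      Nat.cast_pred hcard]
  calc ‖v i - n⁻¹ • ∑ j, v j‖ = n⁻¹ * ‖∑ j, (v i - v j)‖ := by
        rw [hcentroid, norm_smul, norm_inv, Real.norm_of_nonneg hn.le]
    _ ≤ n⁻¹ * ((n - 1) * C) := by
        gcongr
        exact (norm_sum_le _ _).trans hsum
    _ = (n - 1) / n * C := by ring

theorem norm_relative_displacement_sub_le {κ : ℝ} (hκ : 0 < κ) {a b : ℝ → ℝ}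
    {pa pb : ℝ → EuclideanSpace ℝ (Fin 2)}
    (hpa : ∀ t, HasDerivAt pa (WithLp.toLp 2 ![cos (a t), sin (a t)]) t)
    (hpb : ∀ t, HasDerivAt pb (WithLp.toLp 2 ![cos (b t), sin (b t)]) t)
    (hd : ∀ t, HasDerivAt (fun s => a s - b s) (-κ * (a t - b t)) t) {t : ℝ} (ht : 0 ≤ t) :
    ‖(pa t - pb t) - (pa 0 - pb 0)‖ ≤ |a 0 - b 0| / κ := by
  have hdecay : ∀ s, a s - b s = (a 0 - b 0) * exp (-κ * s) :=
    eq_mul_exp_of_hasDerivAt_neg_mul hd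
  have hspeed : ∀ s ∈ Set.Ico 0 t, ‖WithLp.toLp 2 ![cos (a s), sin (a s)]
      - WithLp.toLp 2 ![cos (b s), sin (b s)]‖ ≤ |a 0 - b 0| * exp (-κ * s) := fun s _ =>
    (norm_cos_sin_sub_cos_sin_le _ _).trans_eq
      (by rw [hdecay s, abs_mul, abs_of_pos (exp_pos _)])
  calc ‖(pa t - pb t) - (pa 0 - pb 0)‖
      ≤ |a 0 - b 0| / κ * (1 - exp (-κ * t)) :=
        norm_sub_le_of_norm_deriv_le_exp hκ.ne' ht (fun s => (hpa s).sub (hpb s)) hspeed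
    _ ≤ |a 0 - b 0| / κ :=
        mul_le_of_le_one_right (by positivity) (by linarith [exp_pos (-κ * t)])

theorem unicycle_deployment_deformation_bound_general
    (N : ℕ) (κ : ℝ) (hκ : 0 < κ)
    (α : Fin N → ℝ → ℝ)
    (p : Fin N → ℝ → EuclideanSpace ℝ (Fin 2))
    (hp : ∀ i t, HasDerivAt (p i) (WithLp.toLp 2 ![Real.cos (α i t), Real.sin (α i t)]) t)
    (hδ : ∀ i j t, HasDerivAt (fun s => α i s - α j s) (-κ * (α i t - α j t)) t)
    (hδ0 : ∀ i j, |α i 0 - α j 0| < 2 * Real.pi)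
    (x : Fin N → ℝ → EuclideanSpace ℝ (Fin 2))
    (hx : ∀ i t, x i t = p i t - (N : ℝ)⁻¹ • ∑ j, p j t) :
    ∀ i, ∀ t ≥ 0,
      ‖x i t - x i 0‖ ≤ ((N : ℝ) - 1) / N * (2 * Real.pi / κ) := by
  intro i t ht
  set v : Fin N → EuclideanSpace ℝ (Fin 2) := fun j => p j t - p j 0
  have hcentroid : x i t - x i 0 = v i - (Fintype.card (Fin N) : ℝ)⁻¹ • ∑ j, v j := by
    simp only [hx, v, Fintype.card_fin, Finset.sum_sub_distrib, smul_sub]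
    abel
  have hpair : ∀ j, ‖v i - v j‖ ≤ 2 * π / κ := fun j => by
    calc ‖v i - v j‖ = ‖(p i t - p j t) - (p i 0 - p j 0)‖ := by simp only [v]; congr 1; abel
      _ ≤ |α i 0 - α j 0| / κ := norm_relative_displacement_sub_le hκ (hp i) (hp j) (hδ i j) ht
      _ ≤ 2 * π / κ := by gcongr; exact (hδ0 i j).le
  simpa only [hcentroid, Fintype.card_fin] using norm_sub_sum_div_card_le v i hpair

/-- Lemma 6 (lem:x): for `N` unit-speed unicycles whose pairwise heading differences
decay as `δ̇_ij = −κ δ_ij` with `δ_ij(0) ∈ (−2π, 2π)`, the centroid-relative coordinate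
`xᵢ(t) = pᵢ(t) − (1/N) Σⱼ pⱼ(t)` satisfies
`‖xᵢ(t) − xᵢ(0)‖ ≤ ((N−1)/N)·(2π/κ)` for all `t ≥ 0`. -/
theorem unicycle_deployment_deformation_bound
    (N : ℕ) (hN : 0 < N) (κ : ℝ) (hκ : 0 < κ)
    (α : Fin N → ℝ → ℝ)
    (p : Fin N → ℝ → EuclideanSpace ℝ (Fin 2))
    (hp : ∀ i t, HasDerivAt (p i) (WithLp.toLp 2 ![Real.cos (α i t), Real.sin (α i t)]) t)
    (hδ : ∀ i j t, HasDerivAt (fun s => α i s - α j s) (-κ * (α i t - α j t)) t)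
    (hδ0 : ∀ i j, |α i 0 - α j 0| < 2 * Real.pi)
    (x : Fin N → ℝ → EuclideanSpace ℝ (Fin 2))
    (hx : ∀ i t, x i t = p i t - (N : ℝ)⁻¹ • ∑ j, p j t) :
    ∀ i, ∀ t ≥ 0,
      ‖x i t - x i 0‖ ≤ ((N : ℝ) - 1) / N * (2 * Real.pi / κ) :=
  unicycle_deployment_deformation_bound_general N κ hκ α p hp hδ hδ0 x hx
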